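/- Let R be a commutative ring and M an R-module with Ann_R(M) = {0}. If the idealization R(+)M, with its Z_2-grading H_0 = R ⊕ 0 and H_1 = 0 ⊕ M, is an EM-Z_2-graded ring, then R is an EM-ring. In particular, R is an EM-ring if and only if R(+)R is an EM-Z_2-graded ring with this grading. -/

import Mathlib

/-!
Embed `R` in `R(+)M` by `r ↦ (r, 0)` and project back by `(r, m) ↦ r`. A factorization
`F = c • G` of the lift of a zero-divisor `f ∈ R[X]` projects to `f = c₀ • G₀`, and `G₀` stays
regular: if a constant `k` kills `G₀`, then `(0, k • m)` kills `G` for every `M`-coefficient `m`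
of `G`, so `k` kills those too, and then `(k, 0)` kills `G`.

Conversely, over `R(+)R` a homogeneous polynomial of degree `0` is the lift of some `f ∈ R[X]`
and one of degree `1` is `(0, 1) • f`. Regular polynomials over `R` lift to regular ones, so an
EM-factorization of `f` lifts; in degree `1` the content becomes `(0, c)`, which is a
zero-divisor as soon as `c ≠ 0` because `(0, c)² = 0`.
-/

open Polynomial

/-- A commutative ring `S` is an EM-ring if every zero-divisor polynomial in `S[x]`
has an annihilating content. -/
def IsEMRing (S : Type*) [CommRing S] : Prop :=
  ∀ f : S[X], f ∉ nonZeroDivisors S[X] →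
    ∃ (c : S) (g : S[X]), c ∉ nonZeroDivisors S ∧ g ∈ nonZeroDivisors S[X] ∧ f = C c * g

/-- The idealization `R(+)M` (the trivial square-zero extension), with its `Z₂`-grading
`H₀ = R ⊕ 0`, `H₁ = 0 ⊕ M`, is EM-`Z₂`-graded: every nonzero homogeneous zero-divisor
polynomial over it has an annihilating content. -/
def IsEMZ2Idealization (R M : Type*) [CommRing R] [AddCommGroup M] [Module R M]
    [Module Rᵐᵒᵖ M] [IsCentralScalar R M] : Prop :=
  ∀ f : Polynomial (TrivSqZeroExt R M), f ≠ 0 →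
    ((∀ i, (f.coeff i).snd = 0) ∨ (∀ i, (f.coeff i).fst = 0)) →
    f ∉ nonZeroDivisors (Polynomial (TrivSqZeroExt R M)) →
    ∃ (c : TrivSqZeroExt R M) (g : Polynomial (TrivSqZeroExt R M)),
      c ∉ nonZeroDivisors (TrivSqZeroExt R M) ∧
      g ∈ nonZeroDivisors (Polynomial (TrivSqZeroExt R M)) ∧
      f = C c * g

open TrivSqZeroExt nonZeroDivisors

local notation "tsze" => TrivSqZeroExt

namespace Polynomial

theorem C_mul_eq_zero_iff {S : Type*} [Semiring S] {x : S} {g : S[X]} :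
    C x * g = 0 ↔ ∀ i, x * g.coeff i = 0 := by
  simp [Polynomial.ext_iff, coeff_C_mul]

theorem exists_coeff_eq_apply_coeff {S T : Type*} [Semiring S] [Semiring T] (φ : T → S)
    (hφ : φ 0 = 0) (F : T[X]) : ∃ f : S[X], ∀ i, f.coeff i = φ (F.coeff i) :=
  ⟨∑ i ∈ F.support, monomial i (φ (F.coeff i)), fun i => by
    by_cases hi : F.coeff i = 0 <;> simp [coeff_monomial, hi, hφ]⟩

variable {S : Type*} [CommRing S]

theorem C_mem_nonZeroDivisors {c : S} (hc : c ∈ S⁰) : C c ∈ S[X]⁰ :=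
  Polynomial.mem_nonZeroDivisors_iff.mpr fun a ha =>
    hc.2 a (C_injective (by rwa [C_mul, ← smul_eq_C_mul, C_0]))

theorem notMem_nonZeroDivisors_of_eq_C_mul {f g : S[X]} {c : S} (hf : f ∉ S[X]⁰)
    (hg : g ∈ S[X]⁰) (h : f = C c * g) : c ∉ S⁰ :=
  fun hc => hf (h ▸ mul_mem (C_mem_nonZeroDivisors hc) hg)

theorem map_notMem_nonZeroDivisors {T : Type*} [CommRing T] {φ : S →+* T}
    (hφ : Function.Injective φ) {f : S[X]} (hf : f ∉ S[X]⁰) : f.map φ ∉ T[X]⁰ :=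
  mt (mem_nonZeroDivisors_of_injective (f := mapRingHom φ) (map_injective φ hφ)) hf

end Polynomial

section Idealization

variable {R M : Type*} [CommRing R] [AddCommGroup M] [Module R M] [Module Rᵐᵒᵖ M]
  [IsCentralScalar R M]

namespace TrivSqZeroExt

theorem inr_notMem_nonZeroDivisors {m : M} (hm : m ≠ 0) : inr m ∉ (tsze R M)⁰ :=
  fun h => hm (inr_injective (h.2 (inr m) (inr_mul_inr R m m)))

theorem map_fstHom_mem_nonZeroDivisors {G : (tsze R M)[X]} (hG : G ∈ (tsze R M)[X]⁰) :
    G.map (fstHom R R M) ∈ R[X]⁰ := by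
  rw [Polynomial.mem_nonZeroDivisors_iff]
  intro k hk
  have hfst : ∀ i, k * (G.coeff i).fst = 0 := fun i => by
    simpa using congrArg (coeff · i) hk
  have hsnd : ∀ i, k • (G.coeff i).snd = 0 := fun i => by
    have : C (inr (k • (G.coeff i).snd)) * G = 0 := C_mul_eq_zero_iff.mpr fun j => by
      ext <;> simp [smul_smul, hfst]
    exact inr_injective (C_eq_zero.mp (hG.2 _ this))
  have : C (inl k) * G = 0 := C_mul_eq_zero_iff.mpr fun j => by
    ext <;> simp [hfst, hsnd]
  exact inl_injective (C_eq_zero.mp (hG.2 _ this))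

theorem map_inlHom_map_fstHom {F : (tsze R M)[X]} (h : ∀ i, (F.coeff i).snd = 0) :
    (F.map (fstHom R R M)).map (inlHom R M) = F := by
  ext1 i
  ext <;> simp [h]

theorem map_inlHom_mem_nonZeroDivisors {p : R[X]} (hp : p ∈ R[X]⁰) :
    p.map (inlHom R R) ∈ (tsze R R)[X]⁰ := by
  rw [Polynomial.mem_nonZeroDivisors_iff] at hp ⊢
  intro d hd
  have hco : ∀ i, d * inl (p.coeff i) = 0 := fun i => by simpa using congrArg (coeff · i) hd
  have hfst : d.fst = 0 := hp _ <| Polynomial.ext fun i => by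
    simpa using congrArg fst (hco i)
  have hsnd : d.snd = 0 := hp _ <| Polynomial.ext fun i => by
    simpa [mul_comm] using congrArg snd (hco i)
  exact TrivSqZeroExt.ext hfst hsnd

end TrivSqZeroExt

theorem IsEMZ2Idealization.isEMRing (h : IsEMZ2Idealization R M) : IsEMRing R := by
  intro f hf
  by_cases hf0 : f = 0
  · obtain ⟨a, ha, -⟩ := Polynomial.notMem_nonZeroDivisors_iff.mp hf
    have : Nontrivial R := nontrivial_of_ne a 0 ha
    exact ⟨0, 1, zero_notMem_nonZeroDivisors, one_mem _, by simp [hf0]⟩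
  obtain ⟨c, G, -, hG, hF⟩ := h (f.map (inlHom R M))
    ((Polynomial.map_ne_zero_iff inl_injective).mpr hf0) (Or.inl fun i => by simp)
    (map_notMem_nonZeroDivisors inl_injective hf)
  have hfG : f = C c.fst * G.map (fstHom R R M) := by
    ext i
    simpa [coeff_C_mul] using congrArg (fun p => (p.coeff i).fst) hF
  have hg := map_fstHom_mem_nonZeroDivisors hG
  exact ⟨c.fst, _, notMem_nonZeroDivisors_of_eq_C_mul hf hg hfG, hg, hfG⟩

namespace IsEMRing

theorem exists_eq_C_mul_of_ne_zero (h : IsEMRing R) {f : R[X]} (hf : f ≠ 0) :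
    ∃ c g, c ≠ 0 ∧ g ∈ R[X]⁰ ∧ f = C c * g := by
  by_cases hreg : f ∈ R[X]⁰
  · have : Nontrivial R := Polynomial.nontrivial_iff.mp (nontrivial_of_ne f 0 hf)
    exact ⟨1, f, one_ne_zero, hreg, by simp⟩
  · obtain ⟨c, g, -, hg, rfl⟩ := h f hreg
    exact ⟨c, g, fun hc => hf (by simp [hc]), hg, rfl⟩

theorem exists_eq_C_mul_of_forall_snd_eq_zero (h : IsEMRing R) {F : (tsze R R)[X]}
    (hsnd : ∀ i, (F.coeff i).snd = 0) (hF : F ∉ (tsze R R)[X]⁰) :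
    ∃ c g, c ∉ (tsze R R)⁰ ∧ g ∈ (tsze R R)[X]⁰ ∧ F = C c * g := by
  have hFf := map_inlHom_map_fstHom hsnd
  set f : R[X] := F.map (fstHom R R R)
  have hf : f ∉ R[X]⁰ := fun hf => hF (hFf ▸ map_inlHom_mem_nonZeroDivisors hf)
  obtain ⟨c, g, hc, hg, hfg⟩ := h f hf
  refine ⟨inl c, g.map (inlHom R R),
    mt (mem_nonZeroDivisors_of_injective (f := inlHom R R) inl_injective) hc,
    map_inlHom_mem_nonZeroDivisors hg, ?_⟩
  rw [← hFf, hfg, Polynomial.map_mul, map_C, inlHom_apply]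

theorem exists_eq_C_mul_of_forall_fst_eq_zero (h : IsEMRing R) {F : (tsze R R)[X]}
    (hF0 : F ≠ 0) (hfst : ∀ i, (F.coeff i).fst = 0) :
    ∃ c g, c ∉ (tsze R R)⁰ ∧ g ∈ (tsze R R)[X]⁰ ∧ F = C c * g := by
  obtain ⟨f, hf⟩ := exists_coeff_eq_apply_coeff snd snd_zero F
  have hf0 : f ≠ 0 := fun hf0 => hF0 <| Polynomial.ext fun i =>
    TrivSqZeroExt.ext (hfst i) (by simp [← hf, hf0])
  obtain ⟨c, g, hc, hg, hfg⟩ := h.exists_eq_C_mul_of_ne_zero hf0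
  refine ⟨inr c, g.map (inlHom R R), inr_notMem_nonZeroDivisors hc,
    map_inlHom_mem_nonZeroDivisors hg, ?_⟩
  ext1 i
  ext <;> simp [hfst, ← hf, hfg, mul_comm]

theorem isEMZ2Idealization_self (h : IsEMRing R) : IsEMZ2Idealization R R := by
  rintro F hF0 (hsnd | hfst) hF
  · exact h.exists_eq_C_mul_of_forall_snd_eq_zero hsnd hF
  · exact h.exists_eq_C_mul_of_forall_fst_eq_zero hF0 hfst

end IsEMRing

end Idealization

theorem stmt_19_general (R M : Type*) [CommRing R] [AddCommGroup M] [Module R M]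
    [Module Rᵐᵒᵖ M] [IsCentralScalar R M] :
    (IsEMZ2Idealization R M → IsEMRing R) ∧
      (IsEMRing R ↔ IsEMZ2Idealization R R) :=
  ⟨IsEMZ2Idealization.isEMRing, IsEMRing.isEMZ2Idealization_self, IsEMZ2Idealization.isEMRing⟩

/-- If `Ann_R(M) = 0` and the idealization `R(+)M` is EM-`Z₂`-graded (with
`H₀ = R ⊕ 0`, `H₁ = 0 ⊕ M`), then `R` is an EM-ring. In particular, `R` is an EM-ring iff
`R(+)R` is EM-`Z₂`-graded with this grading. -/
theorem stmt_19 (R M : Type*) [CommRing R] [AddCommGroup M] [Module R M]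
    [Module Rᵐᵒᵖ M] [IsCentralScalar R M]
    (hann : ∀ r : R, (∀ m : M, r • m = 0) → r = 0) :
    (IsEMZ2Idealization R M → IsEMRing R) ∧
      (IsEMRing R ↔ IsEMZ2Idealization R R) :=
  stmt_19_general R M
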